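/- If condition (ii) of the PE equivalence holds (γ₁ ≤ Σ_{k=t+1}^{t+T} ψ(x_kᵀθ/‖θ‖) ≤ γ₂ for all t and nonzero θ), then condition (i) holds with the explicit class-K∞ functions α(r) = γ₁·f_ψ(r) and β(r) = γ₂/f_ψ(1/r) for r > 0, β(0) = 0. -/

import Mathlib

/-!
Generalized homogeneity with `r = 1 / ‖θ‖` and with `r = ‖θ‖` compares each term
`ψ (x_kᵀθ)` with the normalized term `ψ (x_kᵀθ / ‖θ‖)` up to the factors `f_ψ ‖θ‖` and
`f_ψ (1 / ‖θ‖)`. Summing over the window and inserting the bounds `γ₁`, `γ₂` of (ii) gives (i).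
The maps `r ↦ γ₁ f_ψ r` and `r ↦ γ₂ / f_ψ (1 / r)` are of class K∞ because `f_ψ` is: the second
one is the reciprocal of `f_ψ` read backwards along `r ↦ 1 / r`, which swaps `0⁺` and `∞`.
-/

open Finset Filter Topology

/-- A class-K∞ function: continuous on [0,∞), zero at zero, strictly increasing
on [0,∞), and tending to ∞ at ∞. -/
def ClassKInf (f : ℝ → ℝ) : Prop :=
  ContinuousOn f (Set.Ici 0) ∧ f 0 = 0 ∧ StrictMonoOn f (Set.Ici 0) ∧
    Tendsto f atTop atTop

/-- Dot product on ℝⁿ. -/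
def dot {n : ℕ} (x θ : Fin n → ℝ) : ℝ := ∑ i, x i * θ i

/-- `N` is a norm on ℝⁿ. -/
def IsNorm {n : ℕ} (N : (Fin n → ℝ) → ℝ) : Prop :=
  (∀ x, 0 ≤ N x) ∧ (∀ x, N x = 0 ↔ x = 0) ∧
    (∀ (a : ℝ) (x), N (a • x) = |a| * N x) ∧ (∀ x y, N (x + y) ≤ N x + N y)

namespace ClassKInf

variable {f : ℝ → ℝ}

lemma pos (hf : ClassKInf f) {r : ℝ} (hr : 0 < r) : 0 < f r := by
  simpa [hf.2.1] using hf.2.2.1 Set.self_mem_Ici hr.le hr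

lemma const_mul (hf : ClassKInf f) {c : ℝ} (hc : 0 < c) : ClassKInf fun r => c * f r :=
  ⟨continuousOn_const.mul hf.1, by simp [hf.2.1],
    fun _ ha _ hb hab => mul_lt_mul_of_pos_left (hf.2.2.1 ha hb hab) hc,
    hf.2.2.2.const_mul_atTop hc⟩

lemma tendsto_comp_inv_nhdsGT_zero (hf : ClassKInf f) :
    Tendsto (fun r => f r⁻¹) (𝓝[>] 0) atTop :=
  hf.2.2.2.comp tendsto_inv_nhdsGT_zero

lemma tendsto_comp_inv_atTop (hf : ClassKInf f) :
    Tendsto (fun r => f r⁻¹) atTop (𝓝[>] 0) := by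
  have hinv : Tendsto (fun r : ℝ => r⁻¹) atTop (𝓝[≥] 0) :=
    tendsto_nhdsWithin_iff.2 ⟨tendsto_inv_atTop_zero,
      eventually_atTop.2 ⟨0, fun r hr => inv_nonneg.2 hr⟩⟩
  refine tendsto_nhdsWithin_iff.2 ⟨?_, ?_⟩
  · simpa [hf.2.1, Function.comp_def] using (hf.1 0 Set.self_mem_Ici).tendsto.comp hinv
  · filter_upwards [eventually_gt_atTop 0] with r hr using hf.pos (inv_pos.2 hr)

-- Through `0⁻¹ = 0` and `f 0 = 0`, this function vanishes at `r = 0` without a case split.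
lemma inv_comp_inv (hf : ClassKInf f) : ClassKInf fun r => (f r⁻¹)⁻¹ := by
  have hf0 : (f (0 : ℝ)⁻¹)⁻¹ = 0 := by simp [hf.2.1]
  refine ⟨?_, hf0, ?_, hf.tendsto_comp_inv_atTop.inv_tendsto_nhdsGT_zero⟩
  · intro a ha
    rcases (Set.mem_Ici.1 ha).eq_or_lt with rfl | ha
    · rw [← continuousWithinAt_Ioi_iff_Ici, ContinuousWithinAt, hf0]
      exact hf.tendsto_comp_inv_nhdsGT_zero.inv_tendsto_atTop
    · refine ContinuousAt.continuousWithinAt (ContinuousAt.inv₀ ?_ (hf.pos (inv_pos.2 ha)).ne')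
      exact (hf.1.continuousAt (Ici_mem_nhds (inv_pos.2 ha))).comp (continuousAt_inv₀ ha.ne')
  · intro a ha b hb hab
    have hb : 0 < b := (Set.mem_Ici.1 ha).trans_lt hab
    rcases (Set.mem_Ici.1 ha).eq_or_lt with rfl | ha
    · simpa [hf.2.1] using hf.pos (inv_pos.2 hb)
    · exact inv_strictAnti₀ (hf.pos (inv_pos.2 hb)) <|
        hf.2.2.1 (inv_pos.2 hb).le (inv_pos.2 ha).le (inv_strictAnti₀ ha hab)

lemma div_comp_inv (hf : ClassKInf f) {c : ℝ} (hc : 0 < c) : ClassKInf fun r => c / f r⁻¹ := by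
  simpa only [div_eq_mul_inv] using hf.inv_comp_inv.const_mul hc

end ClassKInf

section GeneralizedHomogeneity

variable {ψ fψ : ℝ → ℝ} (hGH : ∀ e r : ℝ, r ≠ 0 → fψ (1 / |r|) * ψ (r * e) ≤ ψ e)
  {s : ℝ} (hs : 0 < s)
include hGH hs

lemma mul_apply_div_le_of_generalizedHomogeneity (e : ℝ) : fψ s * ψ (e / s) ≤ ψ e := by
  simpa [abs_of_pos hs, div_eq_inv_mul] using hGH e s⁻¹ (inv_ne_zero hs.ne')

lemma mul_le_apply_div_of_generalizedHomogeneity (e : ℝ) : fψ s⁻¹ * ψ e ≤ ψ (e / s) := by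
  simpa [abs_of_pos hs, mul_div_cancel₀ _ hs.ne'] using hGH (e / s) s hs.ne'

lemma mul_sum_apply_div_le_of_generalizedHomogeneity {ι : Type*} (S : Finset ι) (e : ι → ℝ) :
    fψ s * ∑ k ∈ S, ψ (e k / s) ≤ ∑ k ∈ S, ψ (e k) := by
  rw [mul_sum]
  exact sum_le_sum fun k _ => mul_apply_div_le_of_generalizedHomogeneity hGH hs (e k)

lemma mul_sum_le_sum_apply_div_of_generalizedHomogeneity {ι : Type*} (S : Finset ι) (e : ι → ℝ) :
    fψ s⁻¹ * ∑ k ∈ S, ψ (e k) ≤ ∑ k ∈ S, ψ (e k / s) := by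
  rw [mul_sum]
  exact sum_le_sum fun k _ => mul_le_apply_div_of_generalizedHomogeneity hGH hs (e k)

end GeneralizedHomogeneity

theorem stmt_4_general {n : ℕ} (ψ : ℝ → ℝ) (fψ : ℝ → ℝ)
    (hpd : ∀ e, ψ e = 0 ↔ e = 0)
    (hf : ClassKInf fψ)
    (hGH : ∀ (e r : ℝ), r ≠ 0 → fψ (1 / |r|) * ψ (r * e) ≤ ψ e)
    (x : ℕ → Fin n → ℝ) (T : ℕ)
    (N : (Fin n → ℝ) → ℝ) (hN : IsNorm N)
    (γ₁ γ₂ : ℝ) (hγ₁ : 0 < γ₁) (hγ₂ : 0 < γ₂)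
    (hii : ∀ (t : ℕ) (θ : Fin n → ℝ), θ ≠ 0 →
      γ₁ ≤ ∑ k ∈ Finset.Icc (t + 1) (t + T), ψ (dot (x k) θ / N θ) ∧
      ∑ k ∈ Finset.Icc (t + 1) (t + T), ψ (dot (x k) θ / N θ) ≤ γ₂)
    (α β : ℝ → ℝ)
    (hα : ∀ r : ℝ, α r = γ₁ * fψ r)
    (hβ0 : β 0 = 0) (hβ : ∀ r : ℝ, r ≠ 0 → β r = γ₂ / fψ (1 / r)) :
    ClassKInf α ∧ ClassKInf β ∧
      ∀ (t : ℕ) (θ : Fin n → ℝ),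
        α (N θ) ≤ ∑ k ∈ Finset.Icc (t + 1) (t + T), ψ (dot (x k) θ) ∧
        ∑ k ∈ Finset.Icc (t + 1) (t + T), ψ (dot (x k) θ) ≤ β (N θ) := by
  obtain rfl : α = fun r => γ₁ * fψ r := funext hα
  obtain rfl : β = fun r => γ₂ / fψ r⁻¹ := funext fun r => by
    rcases eq_or_ne r 0 with rfl | hr
    · simp [hβ0, hf.2.1]
    · rw [hβ r hr, one_div]
  refine ⟨hf.const_mul hγ₁, hf.div_comp_inv hγ₂, fun t θ => ?_⟩
  rcases eq_or_ne θ 0 with rfl | hθ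
  · simp [(hN.2.1 0).2 rfl, hf.2.1, dot, (hpd 0).2 rfl]
  have hNθ : 0 < N θ := (hN.1 θ).lt_of_ne fun h => hθ ((hN.2.1 θ).1 h.symm)
  obtain ⟨hlo, hhi⟩ := hii t θ hθ
  constructor
  · calc γ₁ * fψ (N θ)
        ≤ fψ (N θ) * ∑ k ∈ Icc (t + 1) (t + T), ψ (dot (x k) θ / N θ) := by
          rw [mul_comm]; exact mul_le_mul_of_nonneg_left hlo (hf.pos hNθ).le
      _ ≤ _ := mul_sum_apply_div_le_of_generalizedHomogeneity hGH hNθ _ _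
  · rw [le_div_iff₀' (hf.pos (inv_pos.2 hNθ))]
    exact (mul_sum_le_sum_apply_div_of_generalizedHomogeneity hGH hNθ _ _).trans hhi

/-- if condition (ii) of the PE equivalence holds, then condition (i)
holds with the explicit choices α(r) = γ₁·f_ψ(r) and β(r) = γ₂/f_ψ(1/r), β(0)=0. -/
theorem stmt_4 {n : ℕ} (ψ : ℝ → ℝ) (fψ : ℝ → ℝ)
    (hcont : Continuous ψ) (hnn : ∀ e, 0 ≤ ψ e)
    (hpd : ∀ e, ψ e = 0 ↔ e = 0) (hsym : ∀ e, ψ (-e) = ψ e)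
    (hf : ClassKInf fψ)
    (hGH : ∀ (e r : ℝ), r ≠ 0 → fψ (1 / |r|) * ψ (r * e) ≤ ψ e)
    (x : ℕ → Fin n → ℝ) (T : ℕ) (hT : 0 < T)
    (N : (Fin n → ℝ) → ℝ) (hN : IsNorm N)
    (γ₁ γ₂ : ℝ) (hγ₁ : 0 < γ₁) (hγ₂ : 0 < γ₂)
    (hii : ∀ (t : ℕ) (θ : Fin n → ℝ), θ ≠ 0 →
      γ₁ ≤ ∑ k ∈ Finset.Icc (t + 1) (t + T), ψ (dot (x k) θ / N θ) ∧
      ∑ k ∈ Finset.Icc (t + 1) (t + T), ψ (dot (x k) θ / N θ) ≤ γ₂)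
    (α β : ℝ → ℝ)
    (hα : ∀ r : ℝ, α r = γ₁ * fψ r)
    (hβ0 : β 0 = 0) (hβ : ∀ r : ℝ, r ≠ 0 → β r = γ₂ / fψ (1 / r)) :
    ClassKInf α ∧ ClassKInf β ∧
      ∀ (t : ℕ) (θ : Fin n → ℝ),
        α (N θ) ≤ ∑ k ∈ Finset.Icc (t + 1) (t + T), ψ (dot (x k) θ) ∧
        ∑ k ∈ Finset.Icc (t + 1) (t + T), ψ (dot (x k) θ) ≤ β (N θ) :=
  stmt_4_general ψ fψ hpd hf hGH x T N hN γ₁ γ₂ hγ₁ hγ₂ hii α β hα hβ0 hβ
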